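/- arXiv:1801.01714 — 5 statements merged into one kernel-verified Lean document; each statement's English description precedes it below -/
import Mathlib

section
/- Let P ∈ ℂ[X,Y] be a nonzero homogeneous polynomial of degree n ≥ 1, let ξ = (x₀,y₀) ∈ ℂ² be nonzero, let ℓ_ξ = y₀X − x₀Y, let D_ξ = x₀∂/∂X + y₀∂/∂Y, and let 1 ≤ k ≤ n. Then ℓ_ξᵏ divides P while ℓ_ξ^{k+1} does not (i.e. ξ is exactly a k-fold principal spinor of P) if and only if D_ξ^{n−k+1}P = 0 and D_ξ^{n−k}P ≠ 0. -/
/-!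
Complete `ξ` to a basis of `ℂ²` with determinant `-1`. The corresponding linear substitution of
variables is an algebra automorphism of `ℂ[X,Y]` which preserves homogeneity, sends `ℓ_ξ` to `Y`
and intertwines `D_ξ` with `∂/∂X`. This reduces the claim to `ξ = (0, 1)`, where it is read off
the monomials: in a form of degree `n` every monomial `X^a Y^b` has `a + b = n`, so `Y^k` divides
it iff `a ≤ n - k`, iff `∂_X^(n-k+1)` kills it.
-/

open MvPolynomial

/-- The directional derivative `D_ξ = x₀ ∂/∂X + y₀ ∂/∂Y` on binary forms. -/
noncomputable def dirDeriv (x₀ y₀ : ℂ) (P : MvPolynomial (Fin 2) ℂ) :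
    MvPolynomial (Fin 2) ℂ :=
  x₀ • pderiv (0 : Fin 2) P + y₀ • pderiv (1 : Fin 2) P

theorem Derivation.sum_apply {R A M ι : Type*} [CommSemiring R] [CommSemiring A]
    [Algebra R A] [AddCommMonoid M] [Module A M] [Module R M] (s : Finset ι)
    (D : ι → Derivation R A M) (a : A) : (∑ i ∈ s, D i) a = ∑ i ∈ s, D i a := by
  rw [← Derivation.coeFnAddMonoidHom_apply, map_sum, Finset.sum_apply]
  rfl

namespace MvPolynomial

section Exponents

variable {R σ : Type*} [CommSemiring R]

theorem X_pow_dvd_iff_forall_mem_support {i : σ} {k : ℕ} {p : MvPolynomial σ R} :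
    X i ^ k ∣ p ↔ ∀ m ∈ p.support, k ≤ m i := by
  classical
  have hle (m : σ →₀ ℕ) : Finsupp.single i k ≤ m ↔ k ≤ m i := Finsupp.single_le_iff
  rw [X_pow_eq_monomial, monomial_one_dvd_iff_modMonomial_eq_zero, MvPolynomial.ext_iff]
  refine forall_congr' fun m => ?_
  by_cases h : k ≤ m i
  · simp [coeff_modMonomial_of_le p ((hle m).2 h), h]
  · simp [coeff_modMonomial_of_not_le p (mt (hle m).1 h), h]

variable [NoZeroDivisors R] [CharZero R]

theorem mem_support_pderiv_iff {i : σ} {p : MvPolynomial σ R} {m : σ →₀ ℕ} :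
    m ∈ (pderiv i p).support ↔ m + Finsupp.single i 1 ∈ p.support := by
  simp [coeff_pderiv, Nat.cast_add_one_ne_zero]

theorem iterate_pderiv_eq_zero_iff {i : σ} {j : ℕ} {p : MvPolynomial σ R} :
    (pderiv i)^[j] p = 0 ↔ ∀ m ∈ p.support, m i < j := by
  induction j generalizing p with
  | zero => simp [MvPolynomial.ext_iff]
  | succ j ih =>
    classical
    rw [Function.iterate_succ_apply, ih]
    constructor
    · intro h m hm
      by_cases hmi : m i = 0
      · omega
      have hm' : m - Finsupp.single i 1 + Finsupp.single i 1 = m :=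
        tsub_add_cancel_of_le (Finsupp.single_le_iff.2 (Nat.one_le_iff_ne_zero.2 hmi))
      have := h _ (mem_support_pderiv_iff.2 (hm'.symm ▸ hm))
      simp only [Finsupp.tsub_apply, Finsupp.single_eq_same] at this
      omega
    · intro h m hm
      simpa using h _ (mem_support_pderiv_iff.1 hm)

end Exponents

theorem IsHomogeneous.X_one_pow_dvd_iff_iterate_pderiv_zero {R : Type*} [CommSemiring R]
    [NoZeroDivisors R] [CharZero R] {p : MvPolynomial (Fin 2) R} {n j : ℕ}
    (hp : p.IsHomogeneous n) (hj : j ≤ n + 1) :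
    X 1 ^ j ∣ p ↔ (pderiv 0)^[n + 1 - j] p = 0 := by
  rw [X_pow_dvd_iff_forall_mem_support, iterate_pderiv_eq_zero_iff]
  refine forall₂_congr fun m hm => ?_
  have hdeg : m 0 + m 1 = n := by
    rw [← Fin.sum_univ_two, ← Finsupp.degree_eq_sum]
    by_contra h
    exact mem_support_iff.1 hm (hp.coeff_eq_zero h)
  omega

section LinearSubst

variable {R σ τ : Type*} [CommSemiring R]

theorem semiconj_aeval_derivation {D₁ : Derivation R (MvPolynomial σ R) (MvPolynomial σ R)}
    {D₂ : Derivation R (MvPolynomial τ R) (MvPolynomial τ R)} {g : σ → MvPolynomial τ R}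
    (h : ∀ i, aeval g (D₁ (X i)) = D₂ (g i)) :
    Function.Semiconj (aeval g) D₁ D₂ := by
  intro p
  induction p using MvPolynomial.induction_on with
  | C a => simp [derivation_C]
  | add p q hp hq => simp only [map_add, hp, hq]
  | mul_X p i hp => simp only [Derivation.leibniz, map_add, map_mul, smul_eq_mul, aeval_X, hp, h]

variable [Fintype σ]

noncomputable def linearSubst (M : Matrix σ σ R) : MvPolynomial σ R →ₐ[R] MvPolynomial σ R :=
  aeval fun i => ∑ j, C (M i j) * X j

theorem linearSubst_X (M : Matrix σ σ R) (i : σ) :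
    linearSubst M (X i) = ∑ j, C (M i j) * X j :=
  aeval_X _ _

theorem linearSubst_comp (M N : Matrix σ σ R) :
    (linearSubst N).comp (linearSubst M) = linearSubst (M * N) := by
  refine algHom_ext fun i => ?_
  simp only [AlgHom.comp_apply, linearSubst_X, map_sum, map_mul, algHom_C, algebraMap_eq,
    Matrix.mul_apply, Finset.mul_sum, Finset.sum_mul]
  rw [Finset.sum_comm]
  simp only [mul_assoc]

theorem IsHomogeneous.linearSubst {p : MvPolynomial σ R} {n : ℕ} (hp : p.IsHomogeneous n)
    (M : Matrix σ σ R) : (linearSubst M p).IsHomogeneous n := by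
  simpa [MvPolynomial.linearSubst] using hp.aeval _ fun i =>
    IsHomogeneous.sum _ _ _ fun j _ => isHomogeneous_C_mul_X (M i j) j

variable [DecidableEq σ]

theorem linearSubst_one : linearSubst (1 : Matrix σ σ R) = AlgHom.id R _ := by
  refine algHom_ext fun i => ?_
  simp [linearSubst_X, Matrix.one_apply]

noncomputable def linearSubstEquiv (M : (Matrix σ σ R)ˣ) :
    MvPolynomial σ R ≃ₐ[R] MvPolynomial σ R :=
  AlgEquiv.ofAlgHom (linearSubst M) (linearSubst ↑M⁻¹)
    (by rw [linearSubst_comp, Units.inv_mul, linearSubst_one])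
    (by rw [linearSubst_comp, Units.mul_inv, linearSubst_one])

@[simp]
theorem linearSubstEquiv_apply (M : (Matrix σ σ R)ˣ) (p : MvPolynomial σ R) :
    linearSubstEquiv M p = linearSubst M p :=
  rfl

theorem semiconj_linearSubst_pderiv (M : Matrix σ σ R) (j : σ) :
    Function.Semiconj (linearSubst M) ⇑(∑ i, M i j • pderiv i) (pderiv j) :=
  semiconj_aeval_derivation fun i => by
    simp [Derivation.sum_apply, pderiv_X, Pi.single_apply, smul_eq_C_mul]

end LinearSubst

end MvPolynomial

theorem exists_linearSubstEquiv_eq_X_one_and_semiconj_pderiv_zero {x₀ y₀ : ℂ}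
    (hξ : ¬(x₀ = 0 ∧ y₀ = 0)) :
    ∃ M : (Matrix (Fin 2) (Fin 2) ℂ)ˣ,
      linearSubstEquiv M (C y₀ * X 0 - C x₀ * X 1) = X 1 ∧
      Function.Semiconj (linearSubstEquiv M) (dirDeriv x₀ y₀) (pderiv 0) := by
  obtain ⟨a, b, hdet⟩ : ∃ a b : ℂ, x₀ * b - a * y₀ = -1 := by
    rcases not_and_or.1 hξ with hx | hy
    · exact ⟨0, -x₀⁻¹, by field_simp; ring⟩
    · exact ⟨y₀⁻¹, 0, by field_simp; ring⟩
  have hM : IsUnit !![x₀, a; y₀, b] :=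
    (Matrix.isUnit_iff_isUnit_det _).2 (by simp [Matrix.det_fin_two_of, hdet])
  refine ⟨hM.unit, ?_, ?_⟩
  · have hC : C x₀ * C b - C a * C y₀ = (-1 : MvPolynomial (Fin 2) ℂ) := by
      simpa using congrArg C hdet
    simp [linearSubst_X, Fin.sum_univ_two]
    linear_combination -(X 1 : MvPolynomial (Fin 2) ℂ) * hC
  · have hD : dirDeriv x₀ y₀ = ⇑(∑ i, !![x₀, a; y₀, b] i 0 • pderiv i) := by
      funext p
      simp [dirDeriv, Fin.sum_univ_two]
    rw [hD]
    exact semiconj_linearSubst_pderiv _ 0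

theorem exactly_k_fold_principal_spinor_iff_general
    (n k : ℕ) (hkn : k ≤ n)
    (P : MvPolynomial (Fin 2) ℂ) (hhom : P.IsHomogeneous n)
    (x₀ y₀ : ℂ) (hξ : ¬(x₀ = 0 ∧ y₀ = 0)) :
    ((C y₀ * X 0 - C x₀ * X 1) ^ k ∣ P ∧
      ¬ (C y₀ * X 0 - C x₀ * X 1) ^ (k + 1) ∣ P) ↔
    ((dirDeriv x₀ y₀)^[n - k + 1] P = 0 ∧ (dirDeriv x₀ y₀)^[n - k] P ≠ 0) := by
  obtain ⟨M, hℓ, hD⟩ := exists_linearSubstEquiv_eq_X_one_and_semiconj_pderiv_zero hξ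
  set e := linearSubstEquiv M
  have hdvd (j : ℕ) : (C y₀ * X 0 - C x₀ * X 1) ^ j ∣ P ↔ X 1 ^ j ∣ e P := by
    rw [← map_dvd_iff e, map_pow, hℓ]
  have hzero (j : ℕ) : (dirDeriv x₀ y₀)^[j] P = 0 ↔ (pderiv 0)^[j] (e P) = 0 := by
    rw [← hD.iterate_right j P, map_eq_zero_iff e e.injective]
  have he : (e P).IsHomogeneous n := hhom.linearSubst M
  rw [hdvd, hdvd, ne_eq, hzero, hzero, he.X_one_pow_dvd_iff_iterate_pderiv_zero (by omega),
    he.X_one_pow_dvd_iff_iterate_pderiv_zero (by omega), Nat.sub_add_comm hkn,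
    Nat.add_sub_add_right]

/-- `ξ = (x₀,y₀)` is exactly a `k`-fold principal spinor of the nonzero homogeneous
binary form `P` of degree `n` (i.e. `ℓ_ξᵏ ∣ P` and `ℓ_ξ^(k+1) ∤ P`, where
`ℓ_ξ = y₀X − x₀Y`) if and only if `D_ξ^(n−k+1) P = 0` and `D_ξ^(n−k) P ≠ 0`. -/
theorem exactly_k_fold_principal_spinor_iff
    (n k : ℕ) (hk1 : 1 ≤ k) (hkn : k ≤ n)
    (P : MvPolynomial (Fin 2) ℂ) (hP : P ≠ 0) (hhom : P.IsHomogeneous n)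
    (x₀ y₀ : ℂ) (hξ : ¬(x₀ = 0 ∧ y₀ = 0)) :
    ((C y₀ * X 0 - C x₀ * X 1) ^ k ∣ P ∧
      ¬ (C y₀ * X 0 - C x₀ * X 1) ^ (k + 1) ∣ P) ↔
    ((dirDeriv x₀ y₀)^[n - k + 1] P = 0 ∧ (dirDeriv x₀ y₀)^[n - k] P ≠ 0) :=
  exactly_k_fold_principal_spinor_iff_general n k hkn P hhom x₀ y₀ hξ
end

section
/- Let (o,ι) be a spin basis of ℂ² with associated null tetrad L = ooᴴ, N = ιιᴴ, M = oιᴴ, M̄ = ιoᴴ, and g(X,Y) = tr(X)tr(Y) − tr(XY). Then for all 2×2 complex matrices X and Y: g(X,Y) = g(L,X)g(N,Y) + g(N,X)g(L,Y) − g(M,X)g(M̄,Y) − g(M̄,X)g(M,Y). (This is the null-tetrad decomposition of the metric, g_{ab} = 2l_{(a}n_{b)} − 2m_{(a}m̄_{b)}.) -/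
/-!
The form `g(X, Y) = tr X tr Y - tr (X Y)` is the symmetric bilinear form with `g(X, X) = 2 det X`,
and `g(u wᵀ, X) = wᵀ (adj X) u`. Hence, for bases `(u, v)` and `(p, q)` of the two spinor spaces,
the right-hand side of the decomposition is `g(P (adj X) U, P (adj Y) U)` with `U = [u v]` and
`Pᵀ = [p q]`. Multiplicativity of `det`, together with `det ∘ adj = det` on 2×2 matrices, turns it
into `det U · det P · g(X, Y)`; for the tetrad `det U = ε(o, ι) = 1` and `det P = conj ε(o, ι) = 1`.
-/

open Matrix

section

variable {R : Type*} [CommRing R]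

def spinorProduct (u v : Fin 2 → R) : R := u 0 * v 1 - u 1 * v 0

theorem spinorProduct_star [StarRing R] (u v : Fin 2 → R) :
    spinorProduct (star u) (star v) = star (spinorProduct u v) := by
  simp only [spinorProduct, Pi.star_apply, star_sub, star_mul']

def detPolarization (X Y : Matrix (Fin 2) (Fin 2) R) : R := X.trace * Y.trace - (X * Y).trace

theorem detPolarization_tetrad_expansion (u v p q : Fin 2 → R)
    (X Y : Matrix (Fin 2) (Fin 2) R) :
    detPolarization (vecMulVec u p) X * detPolarization (vecMulVec v q) Y
        + detPolarization (vecMulVec v q) X * detPolarization (vecMulVec u p) Y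
        - detPolarization (vecMulVec u q) X * detPolarization (vecMulVec v p) Y
        - detPolarization (vecMulVec v p) X * detPolarization (vecMulVec u q) Y
      = spinorProduct u v * spinorProduct p q * detPolarization X Y := by
  simp only [detPolarization, spinorProduct, trace_fin_two, mul_apply, vecMulVec_apply,
    Fin.sum_univ_two]
  ring

end

/-- Null-tetrad decomposition of the Minkowski metric,
`g_{ab} = 2l_{(a}n_{b)} − 2m_{(a}m̄_{b)}`: for a spin basis `(o,ι)` with
associated tetrad `L = ooᴴ`, `N = ιιᴴ`, `M = oιᴴ`, `M̄ = ιoᴴ` and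
`g(X,Y) = tr(X)tr(Y) − tr(XY)`, one has, for all 2×2 complex matrices `X, Y`,
`g(X,Y) = g(L,X)g(N,Y) + g(N,X)g(L,Y) − g(M,X)g(M̄,Y) − g(M̄,X)g(M,Y)`. -/
theorem null_tetrad_decomposition_of_metric
    (o ι : Fin 2 → ℂ) (hbasis : o 0 * ι 1 - o 1 * ι 0 = 1) :
    let L := Matrix.vecMulVec o (star o)
    let N := Matrix.vecMulVec ι (star ι)
    let M := Matrix.vecMulVec o (star ι)
    let M' := Matrix.vecMulVec ι (star o)
    let g := fun X Y : Matrix (Fin 2) (Fin 2) ℂ =>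
      X.trace * Y.trace - (X * Y).trace
    ∀ X Y : Matrix (Fin 2) (Fin 2) ℂ,
      g X Y = g L X * g N Y + g N X * g L Y - g M X * g M' Y - g M' X * g M Y := by
  intro L N M M' g X Y
  have hε : spinorProduct o ι = 1 := hbasis
  have hε_star : spinorProduct (star o) (star ι) = 1 := by
    rw [spinorProduct_star, hε, star_one]
  have h := detPolarization_tetrad_expansion o ι (star o) (star ι) X Y
  rw [hε, hε_star, one_mul, one_mul] at h
  exact h.symm
end

section
/- Let C = {x ∈ ℝ⁴ : x₀ > ‖(x₁,x₂,x₃)‖} be the open future cone and let S ⊆ ℝ⁴ be nonempty with F := S + C ≠ ℝ⁴ (F is the chronological future I⁺[S] of S in Minkowski space-time). Then there is a unique function h : ℝ³ → ℝ, Lipschitz with constant 1, such that the topological frontier of F equals the graph {x ∈ ℝ⁴ : x₀ = h(x₁,x₂,x₃)}. In particular the achronal boundary ∂F is achronal (no two of its points differ by an element of C) and is an embedded 3-dimensional C⁰ topological submanifold of ℝ⁴, homeomorphic to ℝ³. -/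
open scoped Pointwise

/-- The Euclidean norm of the spatial part of a 4-vector. -/
noncomputable def spatialNorm (x : Fin 4 → ℝ) : ℝ :=
  Real.sqrt ((x 1) ^ 2 + (x 2) ^ 2 + (x 3) ^ 2)

/-! The boundary is the graph of the arrival time `h p = inf {t | (t, p) ∈ I⁺[S]}`. Over each
spatial point `p` the slice of `I⁺[S]` is open and upward closed, nonempty because `S` is, and
bounded below because `I⁺[I⁺[S]] ⊆ I⁺[S] ≠ ℝ⁴`; so it is the ray `(h p, ∞)`. Since `(t, p) ∈ I⁺[S]`
forces `(t', q) ∈ I⁺[S]` whenever `‖q - p‖ < t' - t`, `h` is 1-Lipschitz, and `I⁺[S]` is the strict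
epigraph of a continuous function, whose frontier is its graph. A 1-Lipschitz graph contains no
two chronologically related points and projects homeomorphically onto space. -/

open Set Filter Topology

theorem eq_Ioi_csInf_of_isOpen_of_isUpperSet {α : Type*} [ConditionallyCompleteLinearOrder α]
    [TopologicalSpace α] [OrderTopology α] [DenselyOrdered α] [NoMinOrder α] {s : Set α}
    (hs : IsOpen s) (hup : IsUpperSet s) (hne : s.Nonempty) (hbdd : BddBelow s) :
    s = Ioi (sInf s) := by
  refine Subset.antisymm (fun x hx => ?_) (fun x hx => ?_)
  · have hleft : ∀ᶠ y in 𝓝[<] x, y ∈ s := mem_nhdsWithin_of_mem_nhds (hs.mem_nhds hx)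
    obtain ⟨y, hys, hyx⟩ := (hleft.and self_mem_nhdsWithin).exists
    exact (csInf_le hbdd hys).trans_lt hyx
  · obtain ⟨y, hys, hyx⟩ := exists_lt_of_csInf_lt hne hx
    exact hup hyx.le hys

namespace Minkowski

variable {n : ℕ}

def spatial (x : Fin (n + 1) → ℝ) : EuclideanSpace ℝ (Fin n) :=
  WithLp.toLp 2 (fun i : Fin n => x i.succ)

def event (t : ℝ) (p : EuclideanSpace ℝ (Fin n)) : Fin (n + 1) → ℝ :=
  Fin.cons t p.ofLp

@[simp] lemma event_zero (t : ℝ) (p : EuclideanSpace ℝ (Fin n)) : event t p 0 = t := rfl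

@[simp] lemma spatial_event (t : ℝ) (p : EuclideanSpace ℝ (Fin n)) : spatial (event t p) = p := by
  ext i; simp [spatial, event]

@[simp] lemma event_time_spatial (x : Fin (n + 1) → ℝ) : event (x 0) (spatial x) = x :=
  Fin.cons_self_tail x

lemma spatial_sub (x y : Fin (n + 1) → ℝ) : spatial (x - y) = spatial x - spatial y := by
  ext i; simp [spatial]

lemma event_add (s t : ℝ) (p q : EuclideanSpace ℝ (Fin n)) :
    event s p + event t q = event (s + t) (p + q) := by
  ext i; refine Fin.cases ?_ (fun j => ?_) i <;> simp [event]

lemma continuous_spatial : Continuous (spatial (n := n)) :=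
  (PiLp.continuous_toLp 2 _).comp (continuous_pi fun _ => continuous_apply _)

lemma continuous_event {X : Type*} [TopologicalSpace X] {f : X → ℝ}
    {g : X → EuclideanSpace ℝ (Fin n)} (hf : Continuous f) (hg : Continuous g) :
    Continuous fun x => event (f x) (g x) := by
  refine continuous_pi fun i => Fin.cases ?_ (fun j => ?_) i
  · simpa using hf
  · simp only [event, Fin.cons_succ]
    fun_prop

def futureCone (n : ℕ) : Set (Fin (n + 1) → ℝ) := {x | ‖spatial x‖ < x 0}

lemma event_mem_futureCone {t : ℝ} {p : EuclideanSpace ℝ (Fin n)} :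
    event t p ∈ futureCone n ↔ ‖p‖ < t := by
  simp [futureCone]

lemma isOpen_futureCone : IsOpen (futureCone n) :=
  isOpen_lt (continuous_norm.comp continuous_spatial) (continuous_apply 0)

lemma add_mem_futureCone {x y : Fin (n + 1) → ℝ} (hx : x ∈ futureCone n) (hy : y ∈ futureCone n) :
    x + y ∈ futureCone n := by
  rw [← event_time_spatial x, ← event_time_spatial y, event_add, event_mem_futureCone] at *
  exact (norm_add_le _ _).trans_lt (add_lt_add hx hy)

section Future

variable {S : Set (Fin (n + 1) → ℝ)}

lemma event_mem_add_futureCone_of_dist_lt {s t : ℝ} {p q : EuclideanSpace ℝ (Fin n)}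
    (hp : event s p ∈ S + futureCone n) (h : dist q p < t - s) :
    event t q ∈ S + futureCone n := by
  rw [Set.mem_add] at hp ⊢
  obtain ⟨a, ha, c, hc, hac⟩ := hp
  refine ⟨a, ha, c + event (t - s) (q - p),
    add_mem_futureCone hc (event_mem_futureCone.2 (by rwa [← dist_eq_norm])), ?_⟩
  rw [← add_assoc, hac, event_add, add_sub_cancel, add_sub_cancel]

lemma exists_event_mem_add_futureCone (hS : S.Nonempty) (p : EuclideanSpace ℝ (Fin n)) :
    ∃ t, event t p ∈ S + futureCone n := by
  obtain ⟨a, ha⟩ := hS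
  have hshift : a + event 1 0 ∈ S + futureCone n :=
    Set.add_mem_add ha (event_mem_futureCone.2 (by simp))
  rw [← event_time_spatial a, event_add, add_zero] at hshift
  exact ⟨a 0 + 1 + dist p (spatial a) + 1,
    event_mem_add_futureCone_of_dist_lt hshift (by linarith)⟩

lemma bddBelow_setOf_event_mem_add_futureCone (hne : S + futureCone n ≠ univ)
    (p : EuclideanSpace ℝ (Fin n)) : BddBelow {t | event t p ∈ S + futureCone n} := by
  obtain ⟨z, hz⟩ := ne_univ_iff_exists_notMem _ |>.1 hne
  refine ⟨z 0 - dist (spatial z) p, fun t ht => ?_⟩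
  by_contra! hlt
  exact hz (event_time_spatial z ▸ event_mem_add_futureCone_of_dist_lt ht (by linarith))

/-- A junk value unless `S` is nonempty and `S + futureCone n ≠ univ`. -/
noncomputable def arrivalTime (S : Set (Fin (n + 1) → ℝ)) (p : EuclideanSpace ℝ (Fin n)) : ℝ :=
  sInf {t | event t p ∈ S + futureCone n}

lemma setOf_event_mem_add_futureCone_eq_Ioi (hS : S.Nonempty) (hne : S + futureCone n ≠ univ)
    (p : EuclideanSpace ℝ (Fin n)) :
    {t | event t p ∈ S + futureCone n} = Ioi (arrivalTime S p) := by
  refine eq_Ioi_csInf_of_isOpen_of_isUpperSet ?_ (fun s t hst hs => ?_)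
    (exists_event_mem_add_futureCone hS p) (bddBelow_setOf_event_mem_add_futureCone hne p)
  · exact isOpen_futureCone.add_left.preimage (continuous_event continuous_id continuous_const)
  · rcases hst.eq_or_lt with rfl | hlt
    · exact hs
    · exact event_mem_add_futureCone_of_dist_lt hs (by simpa using hlt)

lemma event_mem_add_futureCone_iff (hS : S.Nonempty) (hne : S + futureCone n ≠ univ)
    {t : ℝ} {p : EuclideanSpace ℝ (Fin n)} :
    event t p ∈ S + futureCone n ↔ arrivalTime S p < t :=
  Set.ext_iff.1 (setOf_event_mem_add_futureCone_eq_Ioi hS hne p) t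

lemma add_futureCone_eq (hS : S.Nonempty) (hne : S + futureCone n ≠ univ) :
    S + futureCone n = {x | arrivalTime S (spatial x) < x 0} := by
  ext x
  simpa using event_mem_add_futureCone_iff hS hne (t := x 0) (p := spatial x)

lemma arrivalTime_le_add_dist (hS : S.Nonempty) (hne : S + futureCone n ≠ univ)
    (p q : EuclideanSpace ℝ (Fin n)) : arrivalTime S q ≤ arrivalTime S p + dist q p := by
  refine le_of_forall_gt_imp_ge_of_dense fun t ht => ?_
  obtain ⟨s, hps, hst⟩ := exists_between (lt_sub_iff_add_lt.2 ht)
  rw [← event_mem_add_futureCone_iff hS hne] at hps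
  exact ((event_mem_add_futureCone_iff hS hne).1
    (event_mem_add_futureCone_of_dist_lt hps (by linarith))).le

lemma lipschitzWith_arrivalTime (hS : S.Nonempty) (hne : S + futureCone n ≠ univ) :
    LipschitzWith 1 (arrivalTime S) :=
  LipschitzWith.of_le_add fun q p => arrivalTime_le_add_dist hS hne p q

end Future

section Graph

variable {h : EuclideanSpace ℝ (Fin n) → ℝ}

def timeGraph (h : EuclideanSpace ℝ (Fin n) → ℝ) : Set (Fin (n + 1) → ℝ) :=
  {x | x 0 = h (spatial x)}

lemma event_mem_timeGraph (h : EuclideanSpace ℝ (Fin n) → ℝ) (p : EuclideanSpace ℝ (Fin n)) :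
    event (h p) p ∈ timeGraph h := by
  simp [timeGraph]

lemma timeGraph_injective : Function.Injective (timeGraph (n := n)) := by
  intro h h' heq
  funext p
  have hp := event_mem_timeGraph h p
  rw [heq] at hp
  simpa [timeGraph] using hp

lemma frontier_setOf_lt_eq_timeGraph (hh : Continuous h) :
    frontier {x : Fin (n + 1) → ℝ | h (spatial x) < x 0} = timeGraph h := by
  refine (frontier_lt_subset_eq (hh.comp continuous_spatial) (continuous_apply 0)).trans
    (fun x hx => Eq.symm hx) |>.antisymm fun x (hx : x 0 = h (spatial x)) => ?_
  rw [frontier_eq_closure_inter_closure]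
  refine ⟨?_, subset_closure (by simp [hx])⟩
  have hcont : Continuous fun t : ℝ => event t (spatial x) :=
    continuous_event continuous_id continuous_const
  have hlim : Tendsto (fun t => event t (spatial x)) (𝓝[>] (x 0)) (𝓝 x) := by
    simpa using (hcont.tendsto (x 0)).mono_left nhdsWithin_le_nhds
  refine mem_closure_of_tendsto hlim (eventually_nhdsWithin_of_forall fun t ht => ?_)
  simpa [← hx] using ht

lemma sub_notMem_futureCone_of_mem_timeGraph (hh : LipschitzWith 1 h) {x y : Fin (n + 1) → ℝ}
    (hx : x ∈ timeGraph h) (hy : y ∈ timeGraph h) : y - x ∉ futureCone n := by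
  simp only [futureCone, timeGraph, mem_ofPred_eq, not_lt, spatial_sub, Pi.sub_apply] at *
  rw [hx, hy, ← dist_eq_norm]
  simpa using (Real.sub_le_dist _ _).trans (hh.dist_le_mul (spatial y) (spatial x))

def timeGraphHomeomorph (hh : Continuous h) : timeGraph h ≃ₜ EuclideanSpace ℝ (Fin n) where
  toFun x := spatial x.1
  invFun p := ⟨event (h p) p, event_mem_timeGraph h p⟩
  left_inv x := Subtype.ext <| by
    have hx : x.1 0 = h (spatial x.1) := x.2
    simp only [← hx, event_time_spatial]
  right_inv p := spatial_event _ _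
  continuous_toFun := continuous_spatial.comp continuous_subtype_val
  continuous_invFun := (continuous_event hh continuous_id).subtype_mk _

end Graph

lemma spatialNorm_eq_norm_spatial (x : Fin 4 → ℝ) : spatialNorm x = ‖spatial (n := 3) x‖ := by
  simp [spatialNorm, EuclideanSpace.norm_eq, spatial, Fin.sum_univ_three]

end Minkowski

open Minkowski

/-- Achronal boundaries in Minkowski space: if `F = S + C` (the chronological
future `I⁺[S]` of a nonempty set `S`, `C` being the open future cone) is a
proper subset of `ℝ⁴`, then the frontier of `F` is the graph of a unique
1-Lipschitz function `h : ℝ³ → ℝ`; in particular it is achronal and is an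
embedded 3-dimensional `C⁰` submanifold homeomorphic to `ℝ³`. -/
theorem achronal_boundary_is_lipschitz_graph
    (S : Set (Fin 4 → ℝ)) (hS : S.Nonempty)
    (C : Set (Fin 4 → ℝ)) (hC : C = {x | spatialNorm x < x 0})
    (F : Set (Fin 4 → ℝ)) (hF : F = S + C) (hne : F ≠ Set.univ) :
    (∃! h : EuclideanSpace ℝ (Fin 3) → ℝ, LipschitzWith 1 h ∧
      frontier F = {x : Fin 4 → ℝ | x 0 = h (WithLp.toLp 2 (fun i : Fin 3 => x i.succ))}) ∧
    (∀ x ∈ frontier F, ∀ y ∈ frontier F, y - x ∉ C) ∧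
    Nonempty (frontier F ≃ₜ EuclideanSpace ℝ (Fin 3)) := by
  obtain rfl : C = futureCone 3 := hC.trans (by simp [futureCone, spatialNorm_eq_norm_spatial])
  subst hF
  have hlip := lipschitzWith_arrivalTime hS hne
  have hfr : frontier (S + futureCone 3) = timeGraph (arrivalTime S) := by
    rw [add_futureCone_eq hS hne, frontier_setOf_lt_eq_timeGraph hlip.continuous]
  refine ⟨⟨arrivalTime S, ⟨hlip, hfr⟩,
      fun h ⟨_, hfr'⟩ => timeGraph_injective (hfr'.symm.trans hfr)⟩, ?_,
    ⟨(Homeomorph.setCongr hfr).trans (timeGraphHomeomorph hlip.continuous)⟩⟩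
  rw [hfr]
  exact fun x hx y hy => sub_notMem_futureCone_of_mem_timeGraph hlip hx hy
end

section
/- Let a,b,c,d ∈ ℂ with ad − bc = 1, let A, C ∈ ℝ and B ∈ ℂ, and define the translation-type function α(ζ) = (A + Bζ + B̄ζ̄ + Cζζ̄)/(1 + ζζ̄). Set A' = A|a|² − Bbā − B̄b̄a + C|b|², B' = Bdā + B̄b̄c − Aāc − Cdb̄, C' = A|c|² − Bc̄d − B̄cd̄ + C|d|², and α'(ζ) = (A' + B'ζ + conj(B')ζ̄ + C'ζζ̄)/(1 + ζζ̄). Then A' and C' are real, and for every ζ ∈ ℂ with cζ + d ≠ 0 one has K_M(ζ)·α(ζ) = α'(f_M(ζ)), where M = [[a,b],[c,d]]. (Hence conjugating a BMS translation by a Lorentz transformation again gives a translation: the translations form a 4-parameter normal subgroup of the BMS group.) -/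
/-!
The numerator of `α` is the Hermitian form `q(z, w) = A|w|² + B z w̄ + B̄ z̄ w + C|z|²` at `(ζ, 1)`,
and its denominator is the standard form `|z|² + |w|²` at `(ζ, 1)`. Both forms scale by `|t|²`
under `(z, w) ↦ (t z, t w)`, so `α'(f_M ζ)` is the ratio of `q'` and the standard form at
`M (ζ, 1) = (aζ + b, cζ + d)`; the latter value is the denominator of `K_M(ζ)`. The coefficients
`A', B', C'` are those of `q' = q ∘ adj M`, and `adj M = M⁻¹` because `det M = 1`, so
`q'(M (ζ, 1)) = q(ζ, 1)` and the factors `1 + |ζ|²` cancel. In particular `A' = q(-b, a)` and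
`C' = q(d, -c)` are real.
-/

open ComplexConjugate

/-- The Hermitian form with matrix `[[C, B], [B̄, A]]`; at `(ζ, 1)` it is the numerator of a
translation-type function. -/
def hermForm (A B C z w : ℂ) : ℂ :=
  A * (w * conj w) + B * z * conj w + conj B * conj z * w + C * (z * conj z)

section hermForm

variable (A B C : ℂ)

theorem hermForm_apply_one (ζ : ℂ) :
    hermForm A B C ζ 1 = A + B * ζ + conj B * conj ζ + C * ζ * conj ζ := by
  simp only [hermForm, map_one]
  ring

theorem hermForm_one_zero_one (z w : ℂ) : hermForm 1 0 1 z w = z * conj z + w * conj w := by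
  simp only [hermForm, map_zero]
  ring

theorem conj_hermForm (z w : ℂ) : conj (hermForm A B C z w) = hermForm (conj A) B (conj C) z w := by
  simp only [hermForm, map_add, map_mul, Complex.conj_conj]
  ring

theorem hermForm_mul (t z w : ℂ) :
    hermForm A B C (t * z) (t * w) = t * conj t * hermForm A B C z w := by
  simp only [hermForm, map_mul]
  ring

/-- The ratio of two Hermitian forms is a function on the projective line. -/
theorem hermForm_div_hermForm_mul (A' B' C' : ℂ) {t : ℂ} (ht : t ≠ 0) (z w : ℂ) :
    hermForm A B C (t * z) (t * w) / hermForm A' B' C' (t * z) (t * w) =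
      hermForm A B C z w / hermForm A' B' C' z w := by
  rw [hermForm_mul, hermForm_mul, mul_div_mul_left _ _ (mul_ne_zero ht ((map_ne_zero conj).2 ht))]

end hermForm

theorem hermForm_comp_adjugate (A C : ℝ) (B a b c d z w : ℂ) :
    hermForm (A * (a * conj a) - B * b * conj a - conj B * conj b * a + C * (b * conj b))
        (B * d * conj a + conj B * conj b * c - A * conj a * c - C * d * conj b)
        (A * (c * conj c) - B * conj c * d - conj B * c * conj d + C * (d * conj d)) z w =
      hermForm A B C (d * z - b * w) (a * w - c * z) := by
  simp only [hermForm, map_add, map_sub, map_mul, Complex.conj_conj, Complex.conj_ofReal]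
  ring

theorem one_add_mul_conj_self_ne_zero (ζ : ℂ) : 1 + ζ * conj ζ ≠ 0 := by
  rw [Complex.mul_conj]
  exact_mod_cast (add_pos_of_pos_of_nonneg one_pos (Complex.normSq_nonneg ζ)).ne'

/-- Conjugating a BMS translation by a Lorentz transformation again gives a
translation: for `M = [[a,b],[c,d]] ∈ SL(2,ℂ)` and the translation-type
function `α(ζ) = (A + Bζ + B̄ζ̄ + Cζζ̄)/(1 + ζζ̄)` (`A, C` real, `B` complex),
the coefficients `A', B', C'` defined below give a function `α'` of the same
form (with `A', C'` real) satisfying `K_M(ζ)·α(ζ) = α'(f_M(ζ))` whenever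
`cζ + d ≠ 0`. Hence the translations form a 4-parameter normal subgroup of the
BMS group. -/
theorem bms_translation_conjugation
    (a b c d : ℂ) (hdet : a * d - b * c = 1) (A C : ℝ) (B : ℂ) :
    let α : ℂ → ℂ := fun ζ =>
      ((A : ℂ) + B * ζ + conj B * conj ζ + (C : ℂ) * ζ * conj ζ) /
        (1 + ζ * conj ζ)
    let A' : ℂ := (A : ℂ) * (a * conj a) - B * b * conj a - conj B * conj b * a
      + (C : ℂ) * (b * conj b)
    let B' : ℂ := B * d * conj a + conj B * conj b * c - (A : ℂ) * conj a * c
      - (C : ℂ) * d * conj b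
    let C' : ℂ := (A : ℂ) * (c * conj c) - B * conj c * d - conj B * c * conj d
      + (C : ℂ) * (d * conj d)
    let α' : ℂ → ℂ := fun w =>
      (A' + B' * w + conj B' * conj w + C' * w * conj w) / (1 + w * conj w)
    let f : ℂ → ℂ := fun ζ => (a * ζ + b) / (c * ζ + d)
    let K : ℂ → ℂ := fun ζ => (1 + ζ * conj ζ) /
      ((a * ζ + b) * conj (a * ζ + b) + (c * ζ + d) * conj (c * ζ + d))
    conj A' = A' ∧ conj C' = C' ∧
    ∀ ζ : ℂ, c * ζ + d ≠ 0 → K ζ * α ζ = α' (f ζ) := by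
  intro α A' B' C' α' f K
  have hpull (z w : ℂ) : hermForm A' B' C' z w = hermForm A B C (d * z - b * w) (a * w - c * z) :=
    hermForm_comp_adjugate A C B a b c d z w
  refine ⟨?_, ?_, fun ζ hD => ?_⟩
  · have hA' : A' = hermForm A B C (-b) a := by simp only [A', hermForm, map_neg]; ring
    rw [hA', conj_hermForm, Complex.conj_ofReal, Complex.conj_ofReal]
  · have hC' : C' = hermForm A B C d (-c) := by simp only [C', hermForm, map_neg]; ring
    rw [hC', conj_hermForm, Complex.conj_ofReal, Complex.conj_ofReal]
  · have hM : hermForm A' B' C' (a * ζ + b) (c * ζ + d) = hermForm A B C ζ 1 := by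
      rw [hpull]
      congr 1
      · linear_combination ζ * hdet
      · linear_combination hdet
    calc K ζ * α ζ = hermForm A B C ζ 1 / hermForm 1 0 1 (a * ζ + b) (c * ζ + d) := by
          simp only [K, α]
          rw [hermForm_apply_one, hermForm_one_zero_one, div_mul_div_comm,
            mul_comm (1 + ζ * conj ζ), mul_div_mul_right _ _ (one_add_mul_conj_self_ne_zero ζ)]
      _ = hermForm A' B' C' (a * ζ + b) (c * ζ + d) / hermForm 1 0 1 (a * ζ + b) (c * ζ + d) := by
          rw [hM]
      _ = hermForm A' B' C' (f ζ) 1 / hermForm 1 0 1 (f ζ) 1 := by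
          rw [show f ζ = (c * ζ + d)⁻¹ * (a * ζ + b) from div_eq_inv_mul _ _,
            ← hermForm_div_hermForm_mul A' B' C' 1 0 1 (inv_ne_zero hD), inv_mul_cancel₀ hD]
      _ = α' (f ζ) := by
          simp only [α', hermForm_apply_one, map_zero, zero_mul, add_zero, one_mul]
end

section
/- Let M = [[a,b],[c,d]] ∈ SL(2,ℂ), let α, β : ℂ → ℝ, and let M⁻¹ = [[d,−b],[−c,a]]. Define β' : ℂ → ℝ by β'(w) = K_M(f_{M⁻¹}(w))·β(f_{M⁻¹}(w)) wherever defined. Then for every (ζ,u) ∈ ℂ × ℝ with cζ + d ≠ 0: b_{M,α}(s_β(ζ,u)) = s_{β'}(b_{M,α}(ζ,u)). Hence conjugation of a supertranslation by any BMS transformation is again a supertranslation: the supertranslations form an abelian normal subgroup of the BMS group. -/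
/-! Off the pole, `f_{M⁻¹} ∘ f_M = id`, so `β' (f_M ζ) = K_M ζ * β ζ`; the claim then reduces to
the linearity of `u ↦ K_M ζ * (u + α ζ)`. -/

section MoebiusInverse

variable {K : Type*} [Field K] {a b c d z : K}

theorem moebius_inv_denom_apply_moebius (hdet : a * d - b * c = 1) (hz : c * z + d ≠ 0) :
    -c * ((a * z + b) / (c * z + d)) + a = 1 / (c * z + d) := by
  field_simp
  linear_combination hdet

theorem moebius_inv_num_apply_moebius (hdet : a * d - b * c = 1) (hz : c * z + d ≠ 0) :
    d * ((a * z + b) / (c * z + d)) - b = z / (c * z + d) := by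
  rw [eq_div_iff hz, sub_mul, mul_assoc, div_mul_cancel₀ _ hz]
  linear_combination z * hdet

theorem moebius_inv_apply_moebius (hdet : a * d - b * c = 1) (hz : c * z + d ≠ 0) :
    (d * ((a * z + b) / (c * z + d)) - b) / (-c * ((a * z + b) / (c * z + d)) + a) = z := by
  rw [moebius_inv_num_apply_moebius hdet hz, moebius_inv_denom_apply_moebius hdet hz,
    div_div_div_cancel_right₀ hz, div_one]

end MoebiusInverse

/-- Conjugation of a supertranslation by any BMS transformation is again a
supertranslation: with `f_M(ζ) = (aζ+b)/(cζ+d)`, `K_M` its conformal factor,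
the BMS transformation `b_{M,α}(ζ,u) = (f_M(ζ), K_M(ζ)(u + α(ζ)))` and the
supertranslation `s_β(ζ,u) = (ζ, u + β(ζ))`, one has
`b_{M,α} ∘ s_β = s_{β'} ∘ b_{M,α}` where
`β'(w) = K_M(f_{M⁻¹}(w))·β(f_{M⁻¹}(w))`. Hence the supertranslations form an
abelian normal subgroup of the BMS group. -/
theorem supertranslations_normal_in_bms
    (a b c d : ℂ) (hdet : a * d - b * c = 1) (α β : ℂ → ℝ) :
    let f : ℂ → ℂ := fun ζ => (a * ζ + b) / (c * ζ + d)
    let finv : ℂ → ℂ := fun w => (d * w - b) / (-c * w + a)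
    let K : ℂ → ℝ := fun ζ => (1 + Complex.normSq ζ) /
      (Complex.normSq (a * ζ + b) + Complex.normSq (c * ζ + d))
    let bMα : ℂ × ℝ → ℂ × ℝ := fun p => (f p.1, K p.1 * (p.2 + α p.1))
    let sβ : ℂ × ℝ → ℂ × ℝ := fun p => (p.1, p.2 + β p.1)
    let β' : ℂ → ℝ := fun w => K (finv w) * β (finv w)
    let sβ' : ℂ × ℝ → ℂ × ℝ := fun p => (p.1, p.2 + β' p.1)
    ∀ (ζ : ℂ) (u : ℝ), c * ζ + d ≠ 0 → bMα (sβ (ζ, u)) = sβ' (bMα (ζ, u)) := by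
  intro f finv K bMα sβ β' sβ' ζ u hζ
  have hfinv : finv (f ζ) = ζ := moebius_inv_apply_moebius hdet hζ
  simp only [bMα, sβ, sβ', β', hfinv, Prod.mk.injEq, true_and]
  ring
end
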